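/- Let (M_n) be a locally square integrable real martingale with M_0 = 0 that is heavy on left. Then for all x > 0, y > 0, a ≥ 0 and b > 0, P(M_n/(a + b[M]_n) ≥ x and [M]_n ≥ y) ≤ exp(−x²(ab + b²y/2)). -/

import Mathlib

open MeasureTheory ProbabilityTheory Real Finset

/-- The truncated version `T_a(x) = min(|x|, a) · sign(x)` of a real number. -/
noncomputable def truncAt (a : ℝ) (x : ℝ) : ℝ := min |x| a * Real.sign x

/-- A martingale `M` is heavy on left if all its increments are conditionally heavy on left:
for all `n ≥ 1` and all `a > 0`, `E[T_a(ΔM_n) | ℱ_{n−1}] ≤ 0` almost surely. -/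
def Martingale.IsHeavyOnLeft {Ω : Type*} {m0 : MeasurableSpace Ω} (μ : Measure Ω)
    (ℱ : Filtration ℕ m0) (M : ℕ → Ω → ℝ) : Prop :=
  ∀ n : ℕ, 1 ≤ n → ∀ a : ℝ, 0 < a →
    ∀ᵐ ω ∂μ, (μ[fun ω' => truncAt a (M n ω' - M (n - 1) ω') | ℱ (n - 1)]) ω ≤ 0

/-!
If `X` is conditionally heavy on left given `𝒢`, then `E[exp (X - X²/2) | 𝒢] ≤ 1`. Indeed,
`cosh u ≤ exp (u²/2)` gives `exp (u - u²/2) - 1 ≤ sign u · H (min |u| 1)` with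
`H w = 1 - exp (-w - w²/2)`, which is concave and nondecreasing on `[0, ∞)`. The piecewise linear
interpolant of `H` on a grid of mesh `δ` lies between `H - H δ` and `H`, and after an Abel
transform it is a nonnegative combination of truncations `T_a`, whose conditional expectations are
nonpositive. Hence `exp (t M_n - t² [M]_n / 2)` has expectation at most one, and on the event in
question `t M_n - t² [M]_n / 2 ≥ x² (a b + b² y / 2)` for `t = x b`, so Chernoff's bound concludes.
-/

lemma truncAt_eq_max_min {a : ℝ} (ha : 0 ≤ a) (x : ℝ) : truncAt a x = max (-a) (min x a) := by
  rcases lt_trichotomy x 0 with hx | rfl | hx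
  · rw [truncAt, Real.sign_of_neg hx, abs_of_neg hx, min_eq_left (by linarith : x ≤ a)]
    rcases le_total (-x) a with h | h
    · rw [min_eq_left h, max_eq_right (by linarith)]; ring
    · rw [min_eq_right h, max_eq_left (by linarith)]; ring
  · simp [truncAt, ha]
  · rw [truncAt, Real.sign_of_pos hx, abs_of_pos hx, mul_one,
      max_eq_right (by linarith [le_min hx.le ha])]

lemma truncAt_of_nonneg {a x : ℝ} (ha : 0 ≤ a) (hx : 0 ≤ x) : truncAt a x = min x a := by
  rw [truncAt_eq_max_min ha, max_eq_right (by linarith [le_min hx ha])]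

lemma truncAt_neg (a x : ℝ) : truncAt a (-x) = -truncAt a x := by
  simp only [truncAt, abs_neg, Real.sign_neg, mul_neg]

lemma continuous_truncAt {a : ℝ} (ha : 0 ≤ a) : Continuous (truncAt a) := by
  simp_rw [funext (truncAt_eq_max_min ha)]
  fun_prop

lemma abs_truncAt_le {a : ℝ} (ha : 0 ≤ a) (x : ℝ) : |truncAt a x| ≤ a := by
  rw [truncAt_eq_max_min ha, abs_le]
  exact ⟨le_max_left _ _, max_le (by linarith) (min_le_right _ _)⟩

lemma truncAt_mul {a t : ℝ} (ha : 0 ≤ a) (ht : 0 < t) (x : ℝ) :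
    truncAt a (t * x) = t * truncAt (a / t) x := by
  rw [truncAt_eq_max_min ha, truncAt_eq_max_min (by positivity), mul_max_of_nonneg _ _ ht.le,
    mul_min_of_nonneg _ _ ht.le, mul_neg, mul_div_cancel₀ _ ht.ne']

theorem Finset.sum_range_mul_sub_by_parts (σ f : ℕ → ℝ) (m : ℕ) :
    ∑ i ∈ range m, σ i * (f (i + 1) - f i)
      = ∑ i ∈ range m, (σ i - σ (i + 1)) * f (i + 1) + σ m * f m - σ 0 * f 0 := by
  induction m with
  | zero => simp
  | succ m ih => rw [sum_range_succ, ih, sum_range_succ]; ring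

/-- `h (a 0) + linInterp h a m` is the piecewise linear interpolant of `h` at the nodes
`a 0 ≤ ⋯ ≤ a m`, extended by a constant beyond `a m`. -/
noncomputable def linInterp (h : ℝ → ℝ) (a : ℕ → ℝ) (m : ℕ) (s : ℝ) : ℝ :=
  ∑ i ∈ range m, slope h (a i) (a (i + 1)) * (min s (a (i + 1)) - min s (a i))

section LinInterp

variable {h : ℝ → ℝ} {a : ℕ → ℝ}

lemma linInterp_of_le (ha : Monotone a) {m : ℕ} {s : ℝ} (hs : a m ≤ s) :
    linInterp h a m s = h (a m) - h (a 0) := by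
  rw [linInterp, ← sum_range_sub (fun i => h (a i))]
  refine sum_congr rfl fun i hi => ?_
  have hi := mem_range.1 hi
  rw [min_eq_right ((ha (by omega : i + 1 ≤ m)).trans hs),
    min_eq_right ((ha (by omega : i ≤ m)).trans hs), mul_comm, ← smul_eq_mul, sub_smul_slope,
    vsub_eq_sub]

lemma ConcaveOn.slope_mul_sub_le {S : Set ℝ} (hh : ConcaveOn ℝ S h) {p q w : ℝ} (hp : p ∈ S)
    (hq : q ∈ S) (hpw : p ≤ w) (hwq : w ≤ q) : slope h p q * (w - p) ≤ h w - h p := by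
  rcases hpw.eq_or_lt with rfl | hpw
  · simp
  have hw : w ∈ S := hh.1.ordConnected.out hp hq ⟨hpw.le, hwq⟩
  calc slope h p q * (w - p) ≤ slope h p w * (w - p) :=
        mul_le_mul_of_nonneg_right
          (hh.slope_anti hp ⟨hw, hpw.ne'⟩ ⟨hq, (hpw.trans_le hwq).ne'⟩ hwq) (by linarith)
    _ = h w - h p := by rw [mul_comm, ← smul_eq_mul, sub_smul_slope, vsub_eq_sub]

lemma linInterp_le (hh : ConcaveOn ℝ (Set.Ici (a 0)) h) (ha : Monotone a) (m : ℕ) {s : ℝ}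
    (hs : a 0 ≤ s) : linInterp h a m s ≤ h (min s (a m)) - h (a 0) := by
  have h0 : h (a 0) = h (min s (a 0)) := by rw [min_eq_right hs]
  rw [h0, ← sum_range_sub (fun i => h (min s (a i)))]
  refine sum_le_sum fun i _ => ?_
  rcases le_total s (a i) with hsi | hsi
  · rw [min_eq_left hsi, min_eq_left (hsi.trans (ha i.le_succ))]
    simp
  · rw [min_eq_right hsi]
    exact hh.slope_mul_sub_le (ha (Nat.zero_le i)) (ha (Nat.zero_le _))
      (le_min hsi (ha i.le_succ)) (min_le_right _ _)

lemma le_linInterp_add (hh : MonotoneOn h (Set.Ici (a 0))) (ha : Monotone a) {D : ℝ} (hD0 : 0 ≤ D)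
    {m : ℕ} (hD : ∀ i < m, h (a (i + 1)) - h (a i) ≤ D) {s : ℝ} (hs : a 0 ≤ s) :
    h (min s (a m)) - h (a 0) ≤ linInterp h a m s + D := by
  induction m with
  | zero => simp [linInterp, min_eq_right hs, hD0]
  | succ m ih =>
    rw [linInterp, sum_range_succ, ← linInterp]
    rcases le_total s (a m) with hsm | hsm
    · rw [min_eq_left hsm, min_eq_left (hsm.trans (ha m.le_succ))]
      simpa [min_eq_left hsm] using ih fun i hi => hD i (by omega)
    · have hmem : ∀ {x}, a m ≤ x → x ∈ Set.Ici (a 0) := fun hx => (ha (Nat.zero_le m)).trans hx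
      have hw : a m ≤ min s (a (m + 1)) := le_min hsm (ha m.le_succ)
      rw [linInterp_of_le ha hsm, min_eq_right hsm]
      have hslope : 0 ≤ slope h (a m) (a (m + 1)) :=
        hh.slope_nonneg (hmem le_rfl) (hmem (ha m.le_succ))
      have hmono : h (min s (a (m + 1))) ≤ h (a (m + 1)) :=
        hh (hmem hw) (hmem (ha m.le_succ)) (min_le_right _ _)
      nlinarith [hD m (by omega), mul_nonneg hslope (sub_nonneg.2 hw)]

lemma sum_truncAt_eq_linInterp (ha : Monotone a) (ha0 : a 0 = 0) {m : ℕ}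
    (hflat : slope h (a m) (a (m + 1)) = 0) {u : ℝ} (hu : 0 ≤ u) :
    ∑ i ∈ range m, (slope h (a i) (a (i + 1)) - slope h (a (i + 1)) (a (i + 2)))
      * truncAt (a (i + 1)) u = linInterp h a m u := by
  have ha' : ∀ i, 0 ≤ a i := fun i => ha0 ▸ ha (Nat.zero_le i)
  rw [linInterp, sum_range_mul_sub_by_parts (fun i => slope h (a i) (a (i + 1)))
    (fun i => min u (a i)), hflat, ha0, min_eq_right hu]
  simp only [zero_mul, mul_zero, add_zero, sub_zero]
  exact sum_congr rfl fun i _ => by rw [truncAt_of_nonneg (ha' _) hu]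

end LinInterp

theorem exists_sum_truncAt_approx {H : ℝ → ℝ} (hconc : ConcaveOn ℝ (Set.Ici 0) H)
    (hmono : MonotoneOn H (Set.Ici 0)) {δ : ℝ} (hδ : 0 < δ) {m : ℕ}
    (hflat : H ((m + 1 : ℕ) * δ) = H (m * δ)) :
    ∃ c b : ℕ → ℝ, (∀ i, 0 ≤ c i) ∧ (∀ i, 0 < b i) ∧
      (∀ u, 0 ≤ u → H (min u (m * δ)) - H δ ≤ ∑ i ∈ range m, c i * truncAt (b i) u) ∧
      (∀ u, u ≤ 0 → H 0 - H (min (-u) (m * δ)) ≤ ∑ i ∈ range m, c i * truncAt (b i) u) := by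
  set a : ℕ → ℝ := fun i => i * δ with ha_def
  set σ : ℕ → ℝ := fun i => slope H (a i) (a (i + 1)) with hσ_def
  have ha : Monotone a := fun i j hij => by
    simp only [ha_def]; gcongr
  have ha0 : a 0 = 0 := by simp [ha_def]
  have hmem : ∀ i, a i ∈ Set.Ici 0 := fun i => Set.mem_Ici.2 (ha0 ▸ ha (Nat.zero_le i))
  have hstep : ∀ i, a (i + 1) - a i = δ := fun i => by simp only [ha_def]; push_cast; ring
  have hσ_anti : Antitone σ := antitone_nat_of_succ_le fun i => by
    simp only [hσ_def, slope_def_field]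
    exact hconc.slope_anti_adjacent (hmem i) (hmem (i + 2)) (by linarith [hstep i])
      (by linarith [hstep (i + 1)])
  have hσm : σ m = 0 := by
    simp only [hσ_def, slope_def_field, ha_def]
    rw [hflat, sub_self, zero_div]
  have hD : ∀ i < m, H (a (i + 1)) - H (a i) ≤ H (a 1) - H (a 0) := fun i _ => by
    rw [← vsub_eq_sub, ← sub_smul_slope, ← vsub_eq_sub (H (a 1)), ← sub_smul_slope, hstep, hstep]
    exact smul_le_smul_of_nonneg_left (hσ_anti (Nat.zero_le i)) hδ.le
  refine ⟨fun i => σ i - σ (i + 1), fun i => a (i + 1), fun i => sub_nonneg.2 (hσ_anti i.le_succ),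
    fun i => by simp only [ha_def]; positivity, fun u hu => ?_, fun u hu => ?_⟩
  · have := le_linInterp_add (hmono.mono (by rw [ha0])) ha (sub_nonneg.2 (hmono (hmem 0) (hmem 1)
      (ha zero_le_one))) hD (ha0.symm ▸ hu)
    rw [sum_truncAt_eq_linInterp ha ha0 hσm hu]
    simp only [ha_def, Nat.cast_zero, zero_mul, Nat.cast_one, one_mul] at this
    linarith
  · have := linInterp_le (h := H) (a := a) (ha0 ▸ hconc) ha m (ha0.symm ▸ neg_nonneg.2 hu)
    have hodd : ∑ i ∈ range m, (σ i - σ (i + 1)) * truncAt (a (i + 1)) u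
        = -∑ i ∈ range m, (σ i - σ (i + 1)) * truncAt (a (i + 1)) (-u) := by
      simp only [truncAt_neg, neg_neg, mul_neg, sum_neg_distrib]
    rw [hodd, sum_truncAt_eq_linInterp ha ha0 hσm (neg_nonneg.2 hu)]
    simp only [ha_def, Nat.cast_zero, zero_mul] at this
    linarith

noncomputable def envelope (w : ℝ) : ℝ := 1 - exp (-w - w ^ 2 / 2)

lemma envelope_zero : envelope 0 = 0 := by simp [envelope]

lemma continuous_envelope : Continuous envelope := by unfold envelope; fun_prop

lemma monotoneOn_envelope : MonotoneOn envelope (Set.Ici 0) := fun v hv w _ hvw => by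
  have hv : (0 : ℝ) ≤ v := hv
  simp only [envelope, sub_le_sub_iff_left, exp_le_exp]
  nlinarith

lemma concaveOn_envelope : ConcaveOn ℝ (Set.Ici 0) envelope := by
  have hinner : ∀ w : ℝ, HasDerivAt (fun v => -v - v ^ 2 / 2) (-1 - w) w := fun w =>
    ((hasDerivAt_id' w).neg.sub ((hasDerivAt_pow 2 w).div_const 2)).congr_deriv (by norm_num)
  have hd1 : ∀ w : ℝ, HasDerivAt envelope ((1 + w) * exp (-w - w ^ 2 / 2)) w := fun w =>
    (((hasDerivAt_exp _).comp w (hinner w)).const_sub 1).congr_deriv (by ring)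
  have hd2 : ∀ w : ℝ, HasDerivAt (fun v => (1 + v) * exp (-v - v ^ 2 / 2))
      (-(w * (w + 2)) * exp (-w - w ^ 2 / 2)) w := fun w =>
    (((hasDerivAt_id' w).const_add 1).mul ((hasDerivAt_exp _).comp w (hinner w))).congr_deriv
      (by simp only [Function.comp_apply]; ring)
  refine concaveOn_of_hasDerivWithinAt2_nonpos (convex_Ici 0) continuous_envelope.continuousOn
    (fun w _ => (hd1 w).hasDerivWithinAt) (fun w _ => (hd2 w).hasDerivWithinAt) fun w hw => ?_
  rw [interior_Ici, Set.mem_Ioi] at hw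
  have : 0 ≤ w * (w + 2) := by positivity
  nlinarith [exp_pos (-w - w ^ 2 / 2)]

lemma exp_sub_sq_add_exp_neg_sub_sq_le_two (u : ℝ) :
    exp (u - u ^ 2 / 2) + exp (-u - u ^ 2 / 2) ≤ 2 := by
  have h := cosh_le_exp_half_sq u
  rw [cosh_eq] at h
  calc exp (u - u ^ 2 / 2) + exp (-u - u ^ 2 / 2) = (exp u + exp (-u)) * exp (-(u ^ 2 / 2)) := by
        rw [add_mul, ← exp_add, ← exp_add]; ring_nf
    _ ≤ 2 * exp (u ^ 2 / 2) * exp (-(u ^ 2 / 2)) := by gcongr; linarith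
    _ = 2 := by rw [mul_assoc, ← exp_add]; simp

lemma exp_sub_sq_sub_one_le_envelope_min (u : ℝ) :
    exp (u - u ^ 2 / 2) - 1 ≤ envelope (min u 1) := by
  set v := min u 1
  have hexp : exp (u - u ^ 2 / 2) ≤ exp (v - v ^ 2 / 2) := by
    rcases le_total u 1 with h | h
    · simp [v, min_eq_left h]
    · simp only [v, min_eq_right h, exp_le_exp]; nlinarith
  have := exp_sub_sq_add_exp_neg_sub_sq_le_two v
  unfold envelope
  linarith

theorem exists_exp_sub_sq_le_one_add_sum_truncAt {ε : ℝ} (hε : 0 < ε) :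
    ∃ (m : ℕ) (c b : ℕ → ℝ), (∀ i, 0 ≤ c i) ∧ (∀ i, 0 < b i) ∧
      ∀ u, exp (u - u ^ 2 / 2) ≤ 1 + ε + ∑ i ∈ range m, c i * truncAt (b i) u := by
  -- Capping makes `H` flat beyond `1`, so the Abel transform of its interpolant has no
  -- boundary term.
  set H : ℝ → ℝ := fun w => min (envelope w) (envelope 1) with hH
  have hH_mono : MonotoneOn H (Set.Ici 0) := fun v hv w hw hvw =>
    min_le_min_right _ (monotoneOn_envelope hv hw hvw)
  have hH_top : ∀ {w}, 1 ≤ w → H w = envelope 1 := fun hw =>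
    min_eq_right (monotoneOn_envelope (Set.mem_Ici.2 zero_le_one) (Set.mem_Ici.2 (by linarith)) hw)
  have hH_conc : ConcaveOn ℝ (Set.Ici 0) H :=
    concaveOn_envelope.inf (concaveOn_const _ (convex_Ici 0))
  have hH0 : H 0 = 0 := by
    have h1 : envelope 0 ≤ envelope 1 :=
      monotoneOn_envelope (Set.mem_Ici.2 le_rfl) (Set.mem_Ici.2 zero_le_one) zero_le_one
    simp only [hH, min_eq_left h1, envelope_zero]
  have hlim : Filter.Tendsto (fun k : ℕ => H (1 / (k + 1))) Filter.atTop (nhds 0) := by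
    rw [← hH0]
    exact ((continuous_envelope.min continuous_const).tendsto 0).comp
      tendsto_one_div_add_atTop_nhds_zero_nat
  obtain ⟨k, hk⟩ := (hlim.eventually (gt_mem_nhds hε)).exists
  have hgrid : ((k + 1 : ℕ) : ℝ) * (1 / (k + 1)) = 1 := by push_cast; field_simp
  have hflat : H ((k + 1 + 1 : ℕ) * (1 / (k + 1))) = H ((k + 1 : ℕ) * (1 / (k + 1))) := by
    rw [hgrid, hH_top le_rfl, hH_top]
    rw [one_div, le_mul_inv_iff₀ (by positivity)]; push_cast; linarith
  obtain ⟨c, b, hc, hb, hpos, hneg⟩ :=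
    exists_sum_truncAt_approx hH_conc hH_mono (by positivity) hflat
  refine ⟨k + 1, c, b, hc, hb, fun u => ?_⟩
  rw [hgrid] at hpos hneg
  rcases le_total 0 u with hu | hu
  · have := hpos u hu
    have hmin : H (min u 1) = envelope (min u 1) := min_eq_left
      (monotoneOn_envelope (le_min hu zero_le_one) (Set.mem_Ici.2 zero_le_one) (min_le_right _ _))
    linarith [exp_sub_sq_sub_one_le_envelope_min u]
  · have := hneg u hu
    have hle : H (min (-u) 1) ≤ envelope (-u) := (min_le_left _ _).trans
      (monotoneOn_envelope (le_min (neg_nonneg.2 hu) zero_le_one) (neg_nonneg.2 hu)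
        (min_le_left _ _))
    have henv : envelope (-u) = 1 - exp (u - u ^ 2 / 2) := by simp only [envelope]; ring_nf
    linarith

section Conditional

variable {Ω : Type*} {m m0 : MeasurableSpace Ω} {μ : Measure[m0] Ω}

def CondHeavyOnLeft (m : MeasurableSpace Ω) (μ : Measure[m0] Ω) (X : Ω → ℝ) : Prop :=
  ∀ a, 0 < a → μ[fun ω => truncAt a (X ω) | m] ≤ᵐ[μ] 0

lemma CondHeavyOnLeft.const_mul {X : Ω → ℝ} (hX : CondHeavyOnLeft m μ X) {t : ℝ} (ht : 0 < t) :
    CondHeavyOnLeft m μ (fun ω => t * X ω) := fun a ha => by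
  have hscale : (fun ω => truncAt a (t * X ω)) = t • fun ω => truncAt (a / t) (X ω) :=
    funext fun ω => truncAt_mul ha.le ht (X ω)
  filter_upwards [condExp_smul (μ := μ) t (fun ω => truncAt (a / t) (X ω)) m,
    hX (a / t) (div_pos ha ht)] with ω hsmul hle
  rw [hscale, hsmul, Pi.smul_apply, smul_eq_mul]
  exact mul_nonpos_of_nonneg_of_nonpos ht.le hle

lemma integrable_truncAt_comp [IsFiniteMeasure μ] {X : Ω → ℝ} (hX : AEStronglyMeasurable X μ)
    {a : ℝ} (ha : 0 ≤ a) : Integrable (fun ω => truncAt a (X ω)) μ :=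
  .of_bound ((continuous_truncAt ha).comp_aestronglyMeasurable hX) a
    (ae_of_all _ fun ω => abs_truncAt_le ha (X ω))

lemma CondHeavyOnLeft.condExp_sum_nonpos [IsFiniteMeasure μ] {X : Ω → ℝ}
    (hX : CondHeavyOnLeft m μ X) (hXm : AEStronglyMeasurable X μ) {ι : Type*} (s : Finset ι)
    {c b : ι → ℝ} (hc : ∀ i, 0 ≤ c i) (hb : ∀ i, 0 < b i) :
    μ[fun ω => ∑ i ∈ s, c i * truncAt (b i) (X ω) | m] ≤ᵐ[μ] 0 := by
  have hsum : (fun ω => ∑ i ∈ s, c i * truncAt (b i) (X ω))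
      = ∑ i ∈ s, c i • fun ω => truncAt (b i) (X ω) := by
    ext ω; simp
  have hint : ∀ i ∈ s, Integrable (c i • fun ω => truncAt (b i) (X ω)) μ :=
    fun i _ => (integrable_truncAt_comp hXm (hb i).le).smul (c i)
  have hterm : ∀ᵐ ω ∂μ, ∀ i ∈ s, μ[c i • fun ω => truncAt (b i) (X ω) | m] ω ≤ 0 := by
    refine (Filter.eventually_all_finset s).2 fun i _ => ?_
    filter_upwards [condExp_smul (μ := μ) (c i) (fun ω => truncAt (b i) (X ω)) m,
      hX (b i) (hb i)] with ω hsmul hle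
    rw [hsmul, Pi.smul_apply, smul_eq_mul]
    exact mul_nonpos_of_nonneg_of_nonpos (hc i) hle
  filter_upwards [condExp_finsetSum hint m, hterm] with ω hω hle
  rw [hsum, hω, Finset.sum_apply]
  exact sum_nonpos hle

lemma integrable_exp_sub_sq [IsFiniteMeasure μ] {X : Ω → ℝ} (hX : AEStronglyMeasurable X μ) :
    Integrable (fun ω => exp (X ω - X ω ^ 2 / 2)) μ :=
  .of_bound (by fun_prop) (exp (1 / 2)) (ae_of_all _ fun ω => by
    rw [Real.norm_of_nonneg (exp_pos _).le, exp_le_exp]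
    nlinarith [sq_nonneg (X ω - 1)])

theorem CondHeavyOnLeft.condExp_exp_sub_sq_le_one [IsFiniteMeasure μ] (hm : m ≤ m0)
    {X : Ω → ℝ} (hX : CondHeavyOnLeft m μ X) (hXm : AEStronglyMeasurable X μ) :
    μ[fun ω => exp (X ω - X ω ^ 2 / 2) | m] ≤ᵐ[μ] 1 := by
  have happrox : ∀ ε > 0, ∀ᵐ ω ∂μ, μ[fun ω => exp (X ω - X ω ^ 2 / 2) | m] ω ≤ 1 + ε := by
    intro ε hε
    obtain ⟨n, c, b, hc, hb, hbound⟩ := exists_exp_sub_sq_le_one_add_sum_truncAt hε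
    set φ : Ω → ℝ := fun ω => ∑ i ∈ range n, c i * truncAt (b i) (X ω)
    have hφ : Integrable φ μ := integrable_finsetSum _ fun i _ =>
      (integrable_truncAt_comp hXm (hb i).le).const_mul (c i)
    filter_upwards [condExp_mono (m := m) (integrable_exp_sub_sq hXm)
      ((integrable_const (1 + ε)).add hφ) (ae_of_all _ fun ω => hbound (X ω)),
      condExp_add (integrable_const (1 + ε)) hφ m, hX.condExp_sum_nonpos hXm (range n) hc hb]
      with ω hmono hadd hφ_nonpos
    rw [hadd, Pi.add_apply, condExp_const hm] at hmono
    exact hmono.trans (add_le_of_nonpos_right hφ_nonpos)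
  have hall := ae_all_iff.2 fun k : ℕ => happrox (1 / (k + 1)) Nat.one_div_pos_of_nat
  filter_upwards [hall] with ω hω
  rw [Pi.one_apply]
  exact ge_of_tendsto' (by simpa using tendsto_one_div_add_atTop_nhds_zero_nat.const_add (1 : ℝ)) hω

end Conditional

lemma Martingale.IsHeavyOnLeft.condHeavyOnLeft {Ω : Type*} {m0 : MeasurableSpace Ω}
    {μ : Measure Ω} {ℱ : Filtration ℕ m0} {M : ℕ → Ω → ℝ} (hM : Martingale.IsHeavyOnLeft μ ℱ M)
    (k : ℕ) : CondHeavyOnLeft (ℱ k) μ (fun ω => M (k + 1) ω - M k ω) := fun a ha => by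
  have h := hM (k + 1) (Nat.le_add_left 1 k) a ha
  rwa [Nat.add_sub_cancel] at h

section ExponentialSupermartingale

variable {Ω : Type*} {m0 : MeasurableSpace Ω} {μ : Measure Ω}

lemma integrable_exp_sum_sub_sq [IsFiniteMeasure μ] {ξ : ℕ → Ω → ℝ}
    (hξ : ∀ k, AEStronglyMeasurable (ξ k) μ) (s : Finset ℕ) :
    Integrable (fun ω => exp (∑ k ∈ s, (ξ k ω - ξ k ω ^ 2 / 2))) μ :=
  .of_bound (by fun_prop) (exp (#s / 2)) (ae_of_all _ fun ω => by
    rw [Real.norm_of_nonneg (exp_pos _).le, exp_le_exp, div_eq_mul_one_div, ← nsmul_eq_mul,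
      ← sum_const]
    exact sum_le_sum fun k _ => by nlinarith [sq_nonneg (ξ k ω - 1)])

theorem integral_exp_sum_sub_sq_le_one [IsProbabilityMeasure μ] {ℱ : Filtration ℕ m0}
    {ξ : ℕ → Ω → ℝ} (hξ : StronglyAdapted ℱ ξ) (hheavy : ∀ k, CondHeavyOnLeft (ℱ k) μ (ξ (k + 1)))
    (n : ℕ) : ∫ ω, exp (∑ k ∈ Icc 1 n, (ξ k ω - ξ k ω ^ 2 / 2)) ∂μ ≤ 1 := by
  have hξm : ∀ k, AEStronglyMeasurable (ξ k) μ := fun k =>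
    ((hξ k).mono (ℱ.le k)).aestronglyMeasurable
  induction n with
  | zero => simp
  | succ n ih =>
    set V : Ω → ℝ := fun ω => exp (∑ k ∈ Icc 1 n, (ξ k ω - ξ k ω ^ 2 / 2))
    set G : Ω → ℝ := fun ω => exp (ξ (n + 1) ω - ξ (n + 1) ω ^ 2 / 2)
    have hsplit : (fun ω => exp (∑ k ∈ Icc 1 (n + 1), (ξ k ω - ξ k ω ^ 2 / 2))) = V * G := by
      ext ω; rw [sum_Icc_succ_top (Nat.le_add_left 1 n), exp_add]; rfl
    have hV : StronglyMeasurable[ℱ n] V :=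
      continuous_exp.comp_stronglyMeasurable (Finset.stronglyMeasurable_fun_sum _ fun k hk =>
        (continuous_id.sub ((continuous_pow 2).div_const 2)).comp_stronglyMeasurable
          ((hξ k).mono (ℱ.mono (mem_Icc.1 hk).2)))
    have hVG : Integrable (V * G) μ := hsplit ▸ integrable_exp_sum_sub_sq hξm _
    have hG : Integrable G μ := integrable_exp_sub_sq (hξm (n + 1))
    rw [hsplit, ← integral_condExp (ℱ.le n)]
    calc ∫ ω, μ[V * G | ℱ n] ω ∂μ ≤ ∫ ω, V ω ∂μ := by
          refine integral_mono_ae integrable_condExp (integrable_exp_sum_sub_sq hξm _) ?_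
          filter_upwards [condExp_mul_of_stronglyMeasurable_left hV hVG hG,
            (hheavy n).condExp_exp_sub_sq_le_one (ℱ.le n) (hξm (n + 1))] with ω hpull hle
          rw [hpull, Pi.mul_apply]
          exact mul_le_of_le_one_right (exp_pos _).le hle
      _ ≤ 1 := ih

end ExponentialSupermartingale

lemma sum_Icc_sub_pred (f : ℕ → ℝ) (n : ℕ) : ∑ k ∈ Icc 1 n, (f k - f (k - 1)) = f n - f 0 := by
  induction n with
  | zero => simp
  | succ n ih => rw [sum_Icc_succ_top (Nat.le_add_left 1 n), ih, Nat.add_sub_cancel]; ring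

lemma sum_Icc_mul_sub_sub_sq {f : ℕ → ℝ} (hf0 : f 0 = 0) (t : ℝ) (n : ℕ) :
    ∑ k ∈ Icc 1 n, (t * (f k - f (k - 1)) - (t * (f k - f (k - 1))) ^ 2 / 2)
      = t * f n - t ^ 2 * (∑ k ∈ Icc 1 n, (f k - f (k - 1)) ^ 2) / 2 := by
  rw [sum_sub_distrib, ← mul_sum, sum_Icc_sub_pred, hf0, sub_zero, mul_sum, sum_div]
  exact congrArg _ (sum_congr rfl fun k _ => by ring)

lemma le_mul_sub_of_le_div {x y a b q S : ℝ} (hx : 0 < x) (ha : 0 ≤ a) (hb : 0 < b) (hS : 0 ≤ S)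
    (hyS : y ≤ S) (hq : x ≤ q / (a + b * S)) :
    x ^ 2 * (a * b + b ^ 2 * y / 2) ≤ x * b * q - (x * b) ^ 2 * S / 2 := by
  have hden : 0 < a + b * S := by
    refine lt_of_le_of_ne (by positivity) fun h => ?_
    rw [← h, div_zero] at hq
    linarith
  have hq' : x * (a + b * S) ≤ q := (le_div_iff₀ hden).1 hq
  nlinarith [mul_le_mul_of_nonneg_left hq' (by positivity : 0 ≤ x * b),
    mul_le_mul_of_nonneg_left hyS (by positivity : 0 ≤ x ^ 2 * b ^ 2)]

lemma measure_ge_le_exp_neg_of_integral_exp_le_one {Ω : Type*} {m0 : MeasurableSpace Ω}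
    {μ : Measure Ω} [IsFiniteMeasure μ] {Z : Ω → ℝ} (hZ : Integrable (fun ω => exp (Z ω)) μ)
    (hZ1 : ∫ ω, exp (Z ω) ∂μ ≤ 1) (c : ℝ) : μ {ω | c ≤ Z ω} ≤ ENNReal.ofReal (exp (-c)) := by
  rw [← ENNReal.ofReal_toReal (measure_ne_top μ _)]
  refine ENNReal.ofReal_le_ofReal
    ((measure_ge_le_exp_mul_mgf c zero_le_one (by simpa using hZ)).trans ?_)
  rw [neg_one_mul]
  exact mul_le_of_le_one_right (exp_pos _).le (by simpa [mgf] using hZ1)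

theorem heavyOnLeft_self_normalized_inequality_with_lower_bound_general
    {Ω : Type*} {m0 : MeasurableSpace Ω} {μ : Measure Ω} [IsProbabilityMeasure μ]
    {ℱ : Filtration ℕ m0} {M : ℕ → Ω → ℝ}
    (hM : Martingale M ℱ μ) (hM0 : M 0 = 0)
    (hheavy : Martingale.IsHeavyOnLeft μ ℱ M)
    (n : ℕ) {x y a b : ℝ} (hx : 0 < x) (ha : 0 ≤ a) (hb : 0 < b) :
    μ {ω | x ≤ M n ω / (a + b * ∑ k ∈ Finset.Icc 1 n, (M k ω - M (k - 1) ω) ^ 2) ∧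
        y ≤ ∑ k ∈ Finset.Icc 1 n, (M k ω - M (k - 1) ω) ^ 2}
      ≤ ENNReal.ofReal (Real.exp (-x ^ 2 * (a * b + b ^ 2 * y / 2))) := by
  set t := x * b
  set ξ : ℕ → Ω → ℝ := fun k ω => t * (M k ω - M (k - 1) ω)
  have hξ : StronglyAdapted ℱ ξ := fun k => ((hM.stronglyAdapted k).sub
    ((hM.stronglyAdapted (k - 1)).mono (ℱ.mono (Nat.sub_le k 1)))).const_mul t
  have hξ_heavy : ∀ k, CondHeavyOnLeft (ℱ k) μ (ξ (k + 1)) := fun k => by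
    simpa [ξ] using (hheavy.condHeavyOnLeft k).const_mul (mul_pos hx hb)
  rw [neg_mul]
  refine (measure_mono fun ω (hω : _ ∧ _) => ?_).trans
    (measure_ge_le_exp_neg_of_integral_exp_le_one
      (integrable_exp_sum_sub_sq (fun k => ((hξ k).mono (ℱ.le k)).aestronglyMeasurable) _)
      (integral_exp_sum_sub_sq_le_one hξ hξ_heavy n) _)
  show _ ≤ ∑ k ∈ Icc 1 n, (ξ k ω - ξ k ω ^ 2 / 2)
  rw [sum_Icc_mul_sub_sub_sq (f := (M · ω)) (by simp [hM0])]
  exact le_mul_sub_of_le_div hx ha hb (sum_nonneg fun k _ => sq_nonneg _) hω.2 hω.1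

/-- Theorem 4.2, inequality (4.3): for a locally square integrable real martingale `M` with
`M 0 = 0` which is heavy on left, for all `x, y > 0`, `a ≥ 0` and `b > 0`,
`P(M n/(a + b[M]_n) ≥ x, [M]_n ≥ y) ≤ exp(−x²(ab + b²y/2))`. -/
theorem heavyOnLeft_self_normalized_inequality_with_lower_bound
    {Ω : Type*} {m0 : MeasurableSpace Ω} {μ : Measure Ω} [IsProbabilityMeasure μ]
    {ℱ : Filtration ℕ m0} {M : ℕ → Ω → ℝ}
    (hM : Martingale M ℱ μ) (hM0 : M 0 = 0) (hMsq : ∀ n, MemLp (M n) 2 μ)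
    (hheavy : Martingale.IsHeavyOnLeft μ ℱ M)
    (n : ℕ) {x y a b : ℝ} (hx : 0 < x) (hy : 0 < y) (ha : 0 ≤ a) (hb : 0 < b) :
    μ {ω | x ≤ M n ω / (a + b * ∑ k ∈ Finset.Icc 1 n, (M k ω - M (k - 1) ω) ^ 2) ∧
        y ≤ ∑ k ∈ Finset.Icc 1 n, (M k ω - M (k - 1) ω) ^ 2}
      ≤ ENNReal.ofReal (Real.exp (-x ^ 2 * (a * b + b ^ 2 * y / 2))) :=
  heavyOnLeft_self_normalized_inequality_with_lower_bound_general hM hM0 hheavy n hx ha hb
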